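/- With the characteristic vector assignment as above, if U and U' are distinct column operators with equal characteristic vectors b(U) = b(U') = b and equal characteristic operators V(U) = V(U'), then U'' = U·U' satisfies b(U'') > b. -/

import Mathlib

/-- The Pauli group modulo phases on a composite particle of `v` qubits, as an
`F₂`-vector space (so multiplication of Pauli operators is written additively and
the identity is `0`). -/
abbrev PauliMP (v : ℕ) := (Fin v → ZMod 2) × (Fin v → ZMod 2)

/-- `f₀` halves the length of a column operator: `f₀(U)_j = U_j · U_{j + 2^{m}}`. -/
def colF0 (v m : ℕ) (U : Fin (2 ^ (m + 1)) → PauliMP v) : Fin (2 ^ m) → PauliMP v :=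
  fun j =>
    U ⟨j.val, lt_of_lt_of_le j.isLt (Nat.pow_le_pow_right (by norm_num) (Nat.le_succ m))⟩ +
    U ⟨j.val + 2 ^ m, by
        have h := j.isLt
        have h2 : 2 ^ (m + 1) = 2 ^ m + 2 ^ m := by ring
        omega⟩

/-- `f₁` truncates a column operator to its first half: `f₁(U)_j = U_j`. -/
def colF1 (v m : ℕ) (U : Fin (2 ^ (m + 1)) → PauliMP v) : Fin (2 ^ m) → PauliMP v :=
  fun j =>
    U ⟨j.val, lt_of_lt_of_le j.isLt (Nat.pow_le_pow_right (by norm_num) (Nat.le_succ m))⟩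

/-- The characteristic data `(b(U), V(U))` of a column operator `U` on `2^m`
composite particles: iteratively, `b_m = 1` and recurse on `f₁(U)` if `f₀(U) = I`,
else `b_m = 0` and recurse on `f₀(U)`; the characteristic operator `V(U)` is the
single Pauli element remaining after `m` steps.  (The bit `b_i` of the paper is
`(charData v m U).1 ⟨i-1, _⟩`.) -/
def charData (v : ℕ) : (m : ℕ) → (Fin (2 ^ m) → PauliMP v) → (Fin m → Bool) × PauliMP v
  | 0, U => (Fin.elim0, U ⟨0, by norm_num⟩)
  | m + 1, U =>
    if colF0 v m U = 0 then
      (Fin.snoc (charData v m (colF1 v m U)).1 true, (charData v m (colF1 v m U)).2)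
    else
      (Fin.snoc (charData v m (colF0 v m U)).1 false, (charData v m (colF0 v m U)).2)

/-- The numerical value `g(b) = Σ b_j 2^{j-1}` of a binary vector, giving the order
on characteristic vectors. -/
def gval {m : ℕ} (b : Fin m → Bool) : ℕ :=
  ∑ j, if b j then 2 ^ (j : ℕ) else 0


/- Column operators form an `F₂`-vector space on which `f₀` and `f₁` are linear, and
`U` is determined by `(f₀ U, f₁ U)`. Induct on `m`, reading the top bit `b_m = [f₀ U = I]`,
which `U` and `U'` share. If it is `1`, then `f₀ U'' = I` too, and `U'' = U · U'` recurses through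
`f₁ U'' = f₁ U · f₁ U'` with `f₁ U ≠ f₁ U'`. If it is `0`, either `f₀ U'' = I`, so the top bit of
`b(U'')` rises from `0` to `1` and dominates all lower bits, or `f₀ U ≠ f₀ U'` and `U''` recurses
through `f₀ U'' = f₀ U · f₀ U'`. At `m = 0` the data `V(U) = U` separates `U` from `U'`. -/

lemma ZModModule.add_eq_zero_iff_eq {G : Type*} [AddCommGroup G] [Module (ZMod 2) G]
    {x y : G} : x + y = 0 ↔ x = y := by
  rw [← ZModModule.sub_eq_add, sub_eq_zero]

section ColumnOperators

variable {v m : ℕ}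

lemma colF0_add (U U' : Fin (2 ^ (m + 1)) → PauliMP v) :
    colF0 v m (U + U') = colF0 v m U + colF0 v m U' := by
  funext j
  simp only [colF0, Pi.add_apply]
  abel

lemma colF1_add (U U' : Fin (2 ^ (m + 1)) → PauliMP v) :
    colF1 v m (U + U') = colF1 v m U + colF1 v m U' :=
  rfl

lemma eq_zero_of_colF0_eq_zero_of_colF1_eq_zero {W : Fin (2 ^ (m + 1)) → PauliMP v}
    (h0 : colF0 v m W = 0) (h1 : colF1 v m W = 0) : W = 0 := by
  funext i
  by_cases hi : i.val < 2 ^ m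
  · exact congrFun h1 ⟨i, hi⟩
  · have hj : i.val - 2 ^ m < 2 ^ m := by have := i.isLt; omega
    have hlow : W ⟨i.val - 2 ^ m, by omega⟩ = 0 := congrFun h1 ⟨_, hj⟩
    have hsum := congrFun h0 ⟨_, hj⟩
    simp only [colF0, hlow, zero_add, Nat.sub_add_cancel (not_lt.mp hi)] at hsum
    exact hsum

lemma colF1_ne_of_colF0_eq_zero {U U' : Fin (2 ^ (m + 1)) → PauliMP v} (hne : U ≠ U')
    (h : colF0 v m U = 0) (h' : colF0 v m U' = 0) : colF1 v m U ≠ colF1 v m U' := by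
  intro h1
  refine hne (ZModModule.add_eq_zero_iff_eq.mp (eq_zero_of_colF0_eq_zero_of_colF1_eq_zero ?_ ?_))
  · rw [colF0_add, h, h', add_zero]
  · rw [colF1_add, h1, ZModModule.add_self]

lemma charData_succ_of_colF0_eq_zero {U : Fin (2 ^ (m + 1)) → PauliMP v}
    (h : colF0 v m U = 0) :
    charData v (m + 1) U =
      (Fin.snoc (charData v m (colF1 v m U)).1 true, (charData v m (colF1 v m U)).2) := by
  rw [charData, if_pos h]

lemma charData_succ_of_colF0_ne_zero {U : Fin (2 ^ (m + 1)) → PauliMP v}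
    (h : colF0 v m U ≠ 0) :
    charData v (m + 1) U =
      (Fin.snoc (charData v m (colF0 v m U)).1 false, (charData v m (colF0 v m U)).2) := by
  rw [charData, if_neg h]

lemma charData_succ_fst_last (U : Fin (2 ^ (m + 1)) → PauliMP v) :
    (charData v (m + 1) U).1 (Fin.last m) = decide (colF0 v m U = 0) := by
  by_cases h : colF0 v m U = 0
  · simp [charData_succ_of_colF0_eq_zero h, h]
  · simp [charData_succ_of_colF0_ne_zero h, h]

end ColumnOperators

lemma snoc_prod_eq_snoc_prod_iff {α β : Type*} {n : ℕ} {d d' : (Fin n → α) × β} {x x' : α} :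
    ((Fin.snoc d.1 x : Fin (n + 1) → α), d.2) = (Fin.snoc d'.1 x', d'.2) ↔ d = d' ∧ x = x' := by
  simp only [Fin.snoc_inj, Prod.ext_iff]
  tauto

lemma gval_snoc {m : ℕ} (b : Fin m → Bool) (x : Bool) :
    gval (Fin.snoc b x) = gval b + if x then 2 ^ m else 0 := by
  simp [gval, Fin.sum_univ_castSucc]

lemma gval_lt {m : ℕ} (b : Fin m → Bool) : gval b < 2 ^ m := by
  induction m with
  | zero => simp [gval]
  | succ n ih =>
    rw [← Fin.snoc_init_self b, gval_snoc, pow_succ]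
    have := ih (Fin.init b)
    split <;> omega

theorem gval_charData_lt_charData_add {v : ℕ} :
    ∀ {m : ℕ} {U U' : Fin (2 ^ m) → PauliMP v}, U ≠ U' → charData v m U = charData v m U' →
      gval (charData v m U).1 < gval (charData v m (U + U')).1
  | 0, U, U', hne, hdata => by
    refine absurd (funext fun i => ?_) hne
    rw [Fin.fin_one_eq_zero i]
    exact congrArg Prod.snd hdata
  | m + 1, U, U', hne, hdata => by
    have hbit : colF0 v m U = 0 ↔ colF0 v m U' = 0 := by
      simpa only [charData_succ_fst_last, decide_eq_decide] using
        congrArg (fun d => d.1 (Fin.last m)) hdata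
    by_cases h : colF0 v m U = 0
    · have h' := hbit.mp h
      have hsum : colF0 v m (U + U') = 0 := by rw [colF0_add, h, h', add_zero]
      rw [charData_succ_of_colF0_eq_zero h, charData_succ_of_colF0_eq_zero h',
        snoc_prod_eq_snoc_prod_iff] at hdata
      have ih := gval_charData_lt_charData_add (colF1_ne_of_colF0_eq_zero hne h h') hdata.1
      rw [charData_succ_of_colF0_eq_zero h, charData_succ_of_colF0_eq_zero hsum, colF1_add,
        gval_snoc, gval_snoc]
      omega
    · have h' : colF0 v m U' ≠ 0 := mt hbit.mpr h
      rw [charData_succ_of_colF0_ne_zero h, charData_succ_of_colF0_ne_zero h',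
        snoc_prod_eq_snoc_prod_iff] at hdata
      rw [charData_succ_of_colF0_ne_zero h, gval_snoc]
      by_cases hsum : colF0 v m (U + U') = 0
      · rw [charData_succ_of_colF0_eq_zero hsum, gval_snoc]
        have := gval_lt (charData v m (colF0 v m U)).1
        simp only [Bool.false_eq_true, if_false, if_true]
        omega
      · have hne0 : colF0 v m U ≠ colF0 v m U' :=
          fun heq => hsum (by rw [colF0_add, ZModModule.add_eq_zero_iff_eq, heq])
        have ih := gval_charData_lt_charData_add hne0 hdata.1
        rw [charData_succ_of_colF0_ne_zero hsum, gval_snoc, colF0_add]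
        simpa using ih

theorem charData_mul_of_eq_general (v m : ℕ) (U U' : Fin (2 ^ m) → PauliMP v)
    (hne : U ≠ U')
    (hb : (charData v m U).1 = (charData v m U').1)
    (hV : (charData v m U).2 = (charData v m U').2) :
    gval (charData v m (U + U')).1 > gval (charData v m U).1 :=
  gval_charData_lt_charData_add hne (Prod.ext hb hV)

/-- If `U` and `U'` are distinct (nonidentity) column operators with equal
characteristic vectors `b(U) = b(U') = b` and equal characteristic operators
`V(U) = V(U')`, then `U'' = U · U'` has characteristic vector `b(U'') > b`. -/
theorem charData_mul_of_eq (v m : ℕ) (U U' : Fin (2 ^ m) → PauliMP v)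
    (hU : U ≠ 0) (hU' : U' ≠ 0) (hne : U ≠ U')
    (hb : (charData v m U).1 = (charData v m U').1)
    (hV : (charData v m U).2 = (charData v m U').2) :
    gval (charData v m (U + U')).1 > gval (charData v m U).1 :=
  charData_mul_of_eq_general v m U U' hne hb hV
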